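/- Let Φ be a nuclear space, T > 0, and let X = {X_t}_{t∈[0,T]} be a cylindrical process in Φ' such that the family {X_t : t ∈ [0,T]} of linear maps Φ → L⁰(Ω,F,P) is equicontinuous, and for each φ ∈ Φ let X̂(φ) = {X̂_t(φ)}_{t∈[0,T]} be a continuous version of X(φ). Then there exists a weaker countably Hilbertian topology θ on Φ such that the family of linear maps {X̂_t : t ∈ [0,T]} from Φ into L⁰(Ω,F,P) is θ-equicontinuous. -/

import Mathlib

open MeasureTheory Topology Filter Set
open scoped ENNReal NNReal

noncomputable section

namespace Paper

universe u

variable {Φ : Type*} [AddCommGroup Φ] [Module ℝ Φ]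

/-- A seminorm `p` is *Hilbertian* if `p(φ)² = Q(φ,φ)` for a symmetric non-negative
bilinear form `Q` on `Φ × Φ`. -/
def IsHilbertian (p : Seminorm ℝ Φ) : Prop :=
  ∃ Q : Φ →ₗ[ℝ] Φ →ₗ[ℝ] ℝ, (∀ x y, Q x y = Q y x) ∧ (∀ x, 0 ≤ Q x x) ∧ ∀ x, (p x) ^ 2 = Q x x

/-- The Hilbert space `Φ_p` (the completion of `Φ/ker p`) is separable; intrinsically:
there is a countable `p`-dense subset of `Φ`. -/
def HasSeparableQuotient (p : Seminorm ℝ Φ) : Prop :=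
  ∃ D : Set Φ, D.Countable ∧ ∀ x : Φ, ∀ ε : ℝ, 0 < ε → ∃ y ∈ D, p (x - y) < ε

/-- The polarization form associated to a Hilbertian seminorm `q`. -/
def polarForm (q : Seminorm ℝ Φ) (x y : Φ) : ℝ :=
  ((q (x + y)) ^ 2 - (q x) ^ 2 - (q y) ^ 2) / 2

/-- For Hilbertian seminorms `p ≤ q`, the canonical inclusion `i_{p,q} : Φ_q → Φ_p` is
Hilbert–Schmidt; intrinsically: the sums `∑ p(φᵢ)²` over finite `q`-orthonormal families
are uniformly bounded. -/
def IsHilbertSchmidtPair (p q : Seminorm ℝ Φ) : Prop :=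
  ∃ C : ℝ, ∀ (m : ℕ) (φ : Fin m → Φ),
    (∀ i j, polarForm q (φ i) (φ j) = if i = j then 1 else 0) →
    ∑ i, (p (φ i)) ^ 2 ≤ C

/-- A linear functional on `Φ` belongs to the Hilbert space `Φ'_q` (the dual of `Φ_q`)
iff it is `q`-bounded. -/
def MemDualOf (q : Seminorm ℝ Φ) (f : Φ →ₗ[ℝ] ℝ) : Prop :=
  ∃ C : ℝ, ∀ φ, |f φ| ≤ C * q φ

/-- The dual norm `q'` on `Φ'_q`. -/
def dualNorm (q : Seminorm ℝ Φ) (f : Φ →ₗ[ℝ] ℝ) : ℝ :=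
  sSup ((fun φ => |f φ|) '' {φ | q φ ≤ 1})

section TopologySection

variable [TopologicalSpace Φ]

/-- `Φ` is a nuclear space: its topology is generated by a family of Hilbertian seminorms
such that each member is dominated by another one with Hilbert–Schmidt inclusion. -/
def IsNuclearSpace (Φ : Type*) [AddCommGroup Φ] [Module ℝ Φ] [TopologicalSpace Φ] : Prop :=
  ∃ (ι : Type) (hι : Nonempty ι) (fam : SeminormFamily ℝ Φ ι),
    (haveI := hι; WithSeminorms fam) ∧
    (∀ i, IsHilbertian (fam i)) ∧
    ∀ i, ∃ j, fam i ≤ fam j ∧ IsHilbertSchmidtPair (fam i) (fam j)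

/-- `Φ` is multi-Hilbertian: its topology is generated by a family of Hilbertian
seminorms, each with separable associated Hilbert space. -/
def IsMultiHilbertian (Φ : Type*) [AddCommGroup Φ] [Module ℝ Φ] [TopologicalSpace Φ] : Prop :=
  ∃ (ι : Type) (hι : Nonempty ι) (fam : SeminormFamily ℝ Φ ι),
    (haveI := hι; WithSeminorms fam) ∧
    ∀ i, IsHilbertian (fam i) ∧ HasSeparableQuotient (fam i)

/-- A weaker countably Hilbertian topology `θ` on `Φ`: an increasing sequence of
continuous Hilbertian seminorms with separable associated Hilbert spaces. -/
structure WCHT (Φ : Type*) [AddCommGroup Φ] [Module ℝ Φ] [TopologicalSpace Φ] where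
  p : ℕ → Seminorm ℝ Φ
  mono : Monotone p
  hilb : ∀ n, IsHilbertian (p n)
  sep : ∀ n, HasSeparableQuotient (p n)
  cont : ∀ n, Continuous ⇑(p n)

/-- `f ∈ Φ'_θ = ⋃ₙ Φ'_{pₙ}`: `f` is continuous for the countably Hilbertian topology `θ`. -/
def WCHT.MemDual (θ : WCHT Φ) (f : Φ → ℝ) : Prop :=
  ∃ (n : ℕ) (C : ℝ), ∀ φ, |f φ| ≤ C * θ.p n φ

end TopologySection

/-- Borel measurability of a map into a topological space. -/
def BorelMeasurable {Ω : Type*} [MeasurableSpace Ω] {α : Type*} [TopologicalSpace α]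
    (X : Ω → α) : Prop :=
  letI := borel α
  Measurable X

/-- The distribution `μ_X` of `X`, as a Borel measure. -/
def distributionOf {Ω : Type*} [MeasurableSpace Ω] {α : Type*} [TopologicalSpace α]
    (P : Measure Ω) (X : Ω → α) : @Measure α (borel α) :=
  letI := borel α
  P.map X

/-- A Borel measure `μ` is *Radon* if for every Borel set `A` and `ε > 0` there is a
compact `K ⊆ A` with `μ (A \ K) < ε`. -/
def IsRadon {α : Type*} [TopologicalSpace α] {mα : MeasurableSpace α}
    (μ : @Measure α mα) : Prop :=
  ∀ A : Set α, MeasurableSet[mα] A → ∀ ε : ℝ≥0∞, 0 < ε →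
    ∃ K, K ⊆ A ∧ IsCompact K ∧ μ (A \ K) < ε

section ProbSection

variable {Ω : Type*} [MeasurableSpace Ω] [TopologicalSpace Φ]

/-- Continuity of `φ ↦ X(φ)` from `Φ` into `L⁰(Ω,F,P)` (convergence in probability). -/
def ContinuousInProb (P : Measure Ω) (X : Φ → Ω → ℝ) : Prop :=
  ∀ φ₀ : Φ, ∀ ε : ℝ, 0 < ε → ∃ U ∈ 𝓝 φ₀, ∀ φ ∈ U,
    P {ω | ε ≤ |X φ ω - X φ₀ ω|} < ENNReal.ofReal ε

/-- Equicontinuity of the family `{X_t : t ∈ s}` of (linear) maps `Φ → L⁰(Ω,F,P)`. -/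
def EquicontinuousInProb (P : Measure Ω) (X : ℝ → Φ → Ω → ℝ) (s : Set ℝ) : Prop :=
  ∀ ε : ℝ, 0 < ε → ∃ U ∈ 𝓝 (0 : Φ), ∀ t ∈ s, ∀ φ ∈ U,
    P {ω | ε ≤ |X t φ ω|} < ENNReal.ofReal ε

/-- `p`-continuity of a (linear) map `Φ → L⁰(Ω,F,P)`. -/
def SeminormContinuousInProb (P : Measure Ω) (p : Seminorm ℝ Φ) (X : Φ → Ω → ℝ) : Prop :=
  ∀ ε : ℝ, 0 < ε → ∃ δ : ℝ, 0 < δ ∧ ∀ φ : Φ, p φ < δ →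
    P {ω | ε ≤ |X φ ω|} < ENNReal.ofReal ε

/-- A cylindrical process in `Φ'`: for each `t ∈ s`, a linear map `Φ → L⁰(Ω,F,P)`. -/
def IsCylindricalProcess (P : Measure Ω) (X : ℝ → Φ → Ω → ℝ) (s : Set ℝ) : Prop :=
  (∀ t ∈ s, ∀ φ : Φ, Measurable (X t φ)) ∧
  ∀ t ∈ s, ∀ (a b : ℝ) (φ ψ : Φ), ∀ᵐ ω ∂P,
    X t (a • φ + b • ψ) ω = a * X t φ ω + b * X t ψ ω

/-- A `Φ'_β`-valued random variable is *regular* if it is a.s. concentrated on the dual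
of a weaker countably Hilbertian topology. -/
def IsRegularRV (P : Measure Ω) (X : Ω → (Φ →L[ℝ] ℝ)) : Prop :=
  ∃ θ : WCHT Φ, ∀ᵐ ω ∂P, θ.MemDual ⇑(X ω)

end ProbSection

/-- Right-continuity with left limits (càdlàg) of a path on a set `s ⊆ ℝ`. -/
def CadlagOn {α : Type*} [TopologicalSpace α] (f : ℝ → α) (s : Set ℝ) : Prop :=
  (∀ t ∈ s, ContinuousWithinAt f (s ∩ Ici t) t) ∧
  ∀ t ∈ s, (𝓝[s ∩ Iio t] t).NeBot → ∃ l : α, Tendsto f (𝓝[s ∩ Iio t] t) (𝓝 l)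

/-- Path regularity: continuous (`cts = true`) or càdlàg (`cts = false`) paths on `s`. -/
def PathReg {α : Type*} [TopologicalSpace α] (cts : Bool) (f : ℝ → α) (s : Set ℝ) : Prop :=
  if cts then ContinuousOn f s else CadlagOn f s

/-- Path regularity of a `Φ'_q`-valued path, in the dual norm `q'`. -/
def PathRegDual (cts : Bool) (q : Seminorm ℝ Φ) (f : ℝ → (Φ →ₗ[ℝ] ℝ)) (s : Set ℝ) : Prop :=
  if cts then ∀ t ∈ s, Tendsto (fun u => dualNorm q (f u - f t)) (𝓝[s] t) (𝓝 0)
  else ((∀ t ∈ s, Tendsto (fun u => dualNorm q (f u - f t)) (𝓝[s ∩ Ici t] t) (𝓝 0)) ∧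
    ∀ t ∈ s, (𝓝[s ∩ Iio t] t).NeBot → ∃ l : Φ →ₗ[ℝ] ℝ, MemDualOf q l ∧
      Tendsto (fun u => dualNorm q (f u - l)) (𝓝[s ∩ Iio t] t) (𝓝 0))

/-- The real-valued process `Z` has a version with continuous (resp. càdlàg) paths on `s`. -/
def HasPathVersion {Ω : Type*} [MeasurableSpace Ω] (P : Measure Ω) (cts : Bool)
    (Z : ℝ → Ω → ℝ) (s : Set ℝ) : Prop :=
  ∃ W : ℝ → Ω → ℝ, (∀ t ∈ s, Measurable (W t)) ∧
    (∀ᵐ ω ∂P, PathReg cts (fun t => W t ω) s) ∧ ∀ t ∈ s, ∀ᵐ ω ∂P, W t ω = Z t ω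

end Paper

/-! Every seminorm `p` of the nuclear family is dominated by a Hilbertian `q` with
Hilbert–Schmidt inclusion, and this makes `Φ_p` separable: a finite `q`-orthonormal family
that almost maximises `∑ p(eᵢ)²` leaves only small `p`-seminorm to the `q`-unit vectors
orthogonal to it, so `Φ` is `p`-approximated by the span of countably many such families.
Equicontinuity gives, for `ε = 1/(k+1)`, finitely many seminorms of the family controlling `X`
on `[0,T]`; the seminorms `√(∑ pᵢ²)` over the growing unions of these finite sets form `θ`, and
since `X̂_t(φ) = X_t(φ)` a.s. for each `t` the bound passes to `X̂`. -/

open scoped RealInnerProductSpace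

section Orthonormal

variable {E : Type*} [SeminormedAddCommGroup E] [InnerProductSpace ℝ E]

theorem Orthonormal.snoc {m : ℕ} {v : Fin m → E} (hv : Orthonormal ℝ v) {u : E} (hu : ‖u‖ = 1)
    (hvu : ∀ i, ⟪v i, u⟫ = 0) : Orthonormal ℝ (Fin.snoc v u : Fin (m + 1) → E) := by
  refine ⟨fun i => ?_, fun i j hij => ?_⟩
  · induction i using Fin.lastCases <;> simp [hu, hv.1]
  · induction i using Fin.lastCases <;> induction j using Fin.lastCases
    · exact absurd rfl hij
    · simp only [Fin.snoc_last, Fin.snoc_castSucc]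
      rw [real_inner_comm]
      exact hvu _
    · simpa using hvu _
    · simpa using hv.2 (fun h => hij (by rw [h]))

theorem Orthonormal.inner_sub_sum_inner_smul {ι : Type*} [Fintype ι] {v : ι → E}
    (hv : Orthonormal ℝ v) (x : E) (j : ι) : ⟪v j, x - ∑ i, ⟪v i, x⟫ • v i⟫ = 0 := by
  rw [inner_sub_right, hv.inner_right_fintype, sub_self]

theorem Orthonormal.norm_sub_sum_inner_smul_le {ι : Type*} [Fintype ι] {v : ι → E}
    (hv : Orthonormal ℝ v) (x : E) : ‖x - ∑ i, ⟪v i, x⟫ • v i‖ ≤ ‖x‖ := by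
  set y := ∑ i, ⟪v i, x⟫ • v i
  have horth : ⟪x - y, y⟫ = 0 := by
    rw [inner_sum]
    refine Finset.sum_eq_zero fun i _ => ?_
    rw [inner_smul_right, real_inner_comm (v i), hv.inner_sub_sum_inner_smul, mul_zero]
  have hpyth := norm_add_sq_eq_norm_sq_add_norm_sq_real horth
  rw [sub_add_cancel] at hpyth
  exact le_of_sq_le_sq (by nlinarith [sq_nonneg ‖y‖]) (norm_nonneg x)

/-- The supremum of `∑ p(eᵢ)²` over finite orthonormal families is almost attained; adding a
further unit vector to a near-maximiser can then raise the sum by less than `ε²`. -/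
theorem exists_orthonormal_seminorm_lt_of_orthogonal {p : Seminorm ℝ E} {C : ℝ}
    (hHS : ∀ (m : ℕ) (v : Fin m → E), Orthonormal ℝ v → ∑ i, p (v i) ^ 2 ≤ C)
    {ε : ℝ} (hε : 0 < ε) :
    ∃ (m : ℕ) (v : Fin m → E), Orthonormal ℝ v ∧
      ∀ u, ‖u‖ = 1 → (∀ i, ⟪v i, u⟫ = 0) → p u < ε := by
  set S : Set ℝ := {s | ∃ (m : ℕ) (v : Fin m → E), Orthonormal ℝ v ∧ ∑ i, p (v i) ^ 2 = s}
  have hS : S.Nonempty := ⟨0, 0, Fin.elim0, ⟨fun i => i.elim0, fun i => i.elim0⟩, by simp⟩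
  have hSbdd : BddAbove S := ⟨C, by rintro _ ⟨m, v, hv, rfl⟩; exact hHS m v hv⟩
  obtain ⟨_, ⟨m, v, hv, rfl⟩, hlt⟩ :=
    exists_lt_of_lt_csSup hS (sub_lt_self (sSup S) (pow_pos hε 2))
  refine ⟨m, v, hv, fun u hu hvu => ?_⟩
  have hle : ∑ i, p (v i) ^ 2 + p u ^ 2 ≤ sSup S :=
    le_csSup hSbdd ⟨m + 1, _, hv.snoc hu hvu, by simp [Fin.sum_univ_castSucc]⟩
  exact lt_of_pow_lt_pow_left₀ 2 hε.le (by linarith)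

theorem Orthonormal.seminorm_sub_sum_inner_smul_le {p : Seminorm ℝ E} (hp : ∀ x, p x ≤ ‖x‖)
    {m : ℕ} {v : Fin m → E} (hv : Orthonormal ℝ v) {ε : ℝ} (hε : 0 ≤ ε)
    (htail : ∀ u, ‖u‖ = 1 → (∀ i, ⟪v i, u⟫ = 0) → p u < ε) (x : E) :
    p (x - ∑ i, ⟪v i, x⟫ • v i) ≤ ε * ‖x‖ := by
  set r := x - ∑ i, ⟪v i, x⟫ • v i
  have hrx : ‖r‖ ≤ ‖x‖ := hv.norm_sub_sum_inner_smul_le x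
  rcases (norm_nonneg r).eq_or_lt with hr | hr
  · exact (hp r).trans (hr ▸ by positivity)
  have hu : ‖‖r‖⁻¹ • r‖ = 1 := by
    rw [norm_smul, norm_inv, norm_norm, inv_mul_cancel₀ hr.ne']
  have hvu : ∀ i, ⟪v i, ‖r‖⁻¹ • r⟫ = 0 := fun i => by
    rw [inner_smul_right, hv.inner_sub_sum_inner_smul, mul_zero]
  calc p r = ‖r‖ * p (‖r‖⁻¹ • r) := by
        rw [map_smul_eq_mul, norm_inv, norm_norm, mul_inv_cancel_left₀ hr.ne']
    _ ≤ ‖r‖ * ε := mul_le_mul_of_nonneg_left (htail _ hu hvu).le hr.le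
    _ ≤ ε * ‖x‖ := by rw [mul_comm]; exact mul_le_mul_of_nonneg_left hrx hε

end Orthonormal

namespace Paper

variable {Φ : Type*} [AddCommGroup Φ] [Module ℝ Φ]

theorem hasSeparableQuotient_of_orthonormal_sum_sq_le {E : Type*} [SeminormedAddCommGroup E]
    [InnerProductSpace ℝ E] {p : Seminorm ℝ E} (hp : ∀ x, p x ≤ ‖x‖) {C : ℝ}
    (hHS : ∀ (m : ℕ) (v : Fin m → E), Orthonormal ℝ v → ∑ i, p (v i) ^ 2 ≤ C) :
    HasSeparableQuotient p := by
  choose m v hv htail using fun n : ℕ =>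
    exists_orthonormal_seminorm_lt_of_orthogonal hHS (Nat.one_div_pos_of_nat (n := n))
  obtain ⟨D, hD, hVD⟩ : TopologicalSpace.IsSeparable
      (Submodule.span ℝ (⋃ n, range (v n)) : Set E) :=
    (countable_iUnion fun n => countable_range (v n)).isSeparable.span
  refine ⟨D, hD, fun x ε hε => ?_⟩
  obtain ⟨n, hn⟩ := exists_nat_gt (2 * ‖x‖ / ε)
  have hxn : 1 / ((n : ℝ) + 1) * ‖x‖ < ε / 2 := by
    rw [div_lt_iff₀ hε] at hn
    rw [one_div_mul_eq_div, div_lt_iff₀ (by positivity)]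
    nlinarith
  set y₀ := ∑ i, ⟪v n i, x⟫ • v n i
  have hy₀ : y₀ ∈ Submodule.span ℝ (⋃ n, range (v n)) :=
    Submodule.sum_mem _ fun i _ =>
      Submodule.smul_mem _ _ (Submodule.subset_span (mem_iUnion.2 ⟨n, mem_range_self i⟩))
  obtain ⟨y, hyD, hy⟩ := Metric.mem_closure_iff.1 (hVD hy₀) (ε / 2) (half_pos hε)
  refine ⟨y, hyD, ?_⟩
  calc p (x - y) = p ((x - y₀) + (y₀ - y)) := by rw [sub_add_sub_cancel]
    _ ≤ p (x - y₀) + p (y₀ - y) := map_add_le_add p _ _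
    _ < ε / 2 + ε / 2 := add_lt_add_of_le_of_lt
        ((hv n).seminorm_sub_sum_inner_smul_le hp (by positivity) (htail n) x |>.trans hxn.le)
        ((hp _).trans_lt (by rwa [← dist_eq_norm]))
    _ = ε := add_halves ε

abbrev formCore (Q : Φ →ₗ[ℝ] Φ →ₗ[ℝ] ℝ) (hsymm : ∀ x y, Q x y = Q y x)
    (hpos : ∀ x, 0 ≤ Q x x) : PreInnerProductSpace.Core ℝ Φ where
  inner x y := Q x y
  conj_inner_symm x y := hsymm x y ▸ rfl
  re_inner_nonneg := hpos
  add_left x y z := by simp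
  smul_left x y r := by simp

def formSeminorm (Q : Φ →ₗ[ℝ] Φ →ₗ[ℝ] ℝ) (hsymm : ∀ x y, Q x y = Q y x)
    (hpos : ∀ x, 0 ≤ Q x x) : Seminorm ℝ Φ :=
  let core := formCore Q hsymm hpos
  let _ : SeminormedAddCommGroup Φ := InnerProductSpace.Core.toSeminormedAddCommGroup (𝕜 := ℝ)
  let _ : NormedSpace ℝ Φ := InnerProductSpace.Core.toNormedSpace (c := core)
  normSeminorm ℝ Φ

theorem formSeminorm_apply (Q : Φ →ₗ[ℝ] Φ →ₗ[ℝ] ℝ) (hsymm : ∀ x y, Q x y = Q y x)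
    (hpos : ∀ x, 0 ≤ Q x x) (x : Φ) : formSeminorm Q hsymm hpos x = √(Q x x) :=
  rfl

theorem isHilbertian_formSeminorm (Q : Φ →ₗ[ℝ] Φ →ₗ[ℝ] ℝ) (hsymm : ∀ x y, Q x y = Q y x)
    (hpos : ∀ x, 0 ≤ Q x x) : IsHilbertian (formSeminorm Q hsymm hpos) :=
  ⟨Q, hsymm, hpos, fun x => by rw [formSeminorm_apply, Real.sq_sqrt (hpos x)]⟩

theorem polarForm_eq {q : Seminorm ℝ Φ} {Q : Φ →ₗ[ℝ] Φ →ₗ[ℝ] ℝ} (hsymm : ∀ x y, Q x y = Q y x)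
    (hqQ : ∀ x, q x ^ 2 = Q x x) (x y : Φ) : polarForm q x y = Q x y := by
  rw [polarForm, hqQ, hqQ, hqQ]
  simp only [map_add, LinearMap.add_apply, hsymm y x]
  ring

theorem IsHilbertSchmidtPair.hasSeparableQuotient {p q : Seminorm ℝ Φ} (hpq : p ≤ q)
    (hq : IsHilbertian q) (hHS : IsHilbertSchmidtPair p q) : HasSeparableQuotient p := by
  obtain ⟨Q, hsymm, hpos, hqQ⟩ := hq
  obtain ⟨C, hC⟩ := hHS
  let core := formCore Q hsymm hpos
  let _ : SeminormedAddCommGroup Φ := InnerProductSpace.Core.toSeminormedAddCommGroup (𝕜 := ℝ)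
  let _ : InnerProductSpace ℝ Φ := InnerProductSpace.ofCore core
  have hnorm : ∀ x : Φ, ‖x‖ = q x := fun x => by
    rw [← Real.sqrt_sq (apply_nonneg q x), hqQ]; rfl
  refine hasSeparableQuotient_of_orthonormal_sum_sq_le (fun x => (hpq x).trans_eq (hnorm x).symm)
    fun m v hv => hC m v fun i j => ?_
  rw [polarForm_eq hsymm hqQ]
  exact orthonormal_iff_ite.1 hv i j

theorem hasSeparableQuotient_zero : HasSeparableQuotient (0 : Seminorm ℝ Φ) :=
  ⟨{0}, countable_singleton 0, fun _ _ hε => ⟨0, rfl, hε⟩⟩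

theorem HasSeparableQuotient.mono {p p' : Seminorm ℝ Φ} (hp : HasSeparableQuotient p)
    (h : p' ≤ p) : HasSeparableQuotient p' :=
  let ⟨D, hD, hdense⟩ := hp
  ⟨D, hD, fun x ε hε => let ⟨y, hy, hxy⟩ := hdense x ε hε; ⟨y, hy, (h _).trans_lt hxy⟩⟩

/-- For each approximant `a` for `p`, `b` for `r` and each precision, one common approximant
is chosen, if there is any. -/
theorem HasSeparableQuotient.add {p r : Seminorm ℝ Φ} (hp : HasSeparableQuotient p)
    (hr : HasSeparableQuotient r) : HasSeparableQuotient (p + r) := by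
  obtain ⟨D₁, hD₁, hdense₁⟩ := hp
  obtain ⟨D₂, hD₂, hdense₂⟩ := hr
  let close (a b : Φ) (n : ℕ) (z : Φ) : Prop :=
    p (z - a) < 1 / ((n : ℝ) + 1) ∧ r (z - b) < 1 / ((n : ℝ) + 1)
  let z (a b : Φ) (n : ℕ) : Φ := Classical.epsilon (close a b n)
  refine ⟨⋃ a ∈ D₁, ⋃ b ∈ D₂, range (z a b),
    hD₁.biUnion fun a _ => hD₂.biUnion fun b _ => countable_range _, fun x ε hε => ?_⟩
  obtain ⟨n, hn⟩ := exists_nat_one_div_lt (by positivity : 0 < ε / 4)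
  obtain ⟨a, ha, hxa⟩ := hdense₁ x _ Nat.one_div_pos_of_nat
  obtain ⟨b, hb, hxb⟩ := hdense₂ x _ Nat.one_div_pos_of_nat
  obtain ⟨hza, hzb⟩ : close a b n (z a b n) := Classical.epsilon_spec ⟨x, hxa, hxb⟩
  refine ⟨z a b n, mem_biUnion ha (mem_biUnion hb (mem_range_self n)), ?_⟩
  have htri (q : Seminorm ℝ Φ) (c : Φ) : q (x - z a b n) ≤ q (x - c) + q (z a b n - c) := by
    simpa using map_sub_le_add q (x - c) (z a b n - c)
  change p (x - z a b n) + r (x - z a b n) < ε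
  linarith [htri p a, htri r b]

theorem HasSeparableQuotient.finset_sum {ι : Type*} {s : Finset ι} {p : ι → Seminorm ℝ Φ}
    (h : ∀ i ∈ s, HasSeparableQuotient (p i)) : HasSeparableQuotient (∑ i ∈ s, p i) :=
  Finset.sum_induction p HasSeparableQuotient (fun _ _ => .add) hasSeparableQuotient_zero h

theorem exists_isHilbertian_sqrt_sum_sq {ι : Type*} {p : ι → Seminorm ℝ Φ}
    (hp : ∀ i, IsHilbertian (p i)) (s : Finset ι) :
    ∃ r : Seminorm ℝ Φ, IsHilbertian r ∧ ∀ x, r x = √(∑ i ∈ s, p i x ^ 2) := by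
  choose Q hsymm hpos hpQ using hp
  have hsymm' (x y : Φ) : (∑ i ∈ s, Q i) x y = (∑ i ∈ s, Q i) y x := by
    simp only [LinearMap.coe_sum, Finset.sum_apply, hsymm]
  have hpos' (x : Φ) : 0 ≤ (∑ i ∈ s, Q i) x x := by
    simp only [LinearMap.coe_sum, Finset.sum_apply]
    exact Finset.sum_nonneg fun i _ => hpos i x
  refine ⟨formSeminorm _ hsymm' hpos', isHilbertian_formSeminorm _ _ _, fun x => ?_⟩
  simp only [formSeminorm_apply, LinearMap.coe_sum, Finset.sum_apply, hpQ]

theorem exists_wcht_finset_sup_le [TopologicalSpace Φ] {ι : Type*} {p : ι → Seminorm ℝ Φ}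
    (hhilb : ∀ i, IsHilbertian (p i)) (hsep : ∀ i, HasSeparableQuotient (p i))
    (hcont : ∀ i, Continuous (p i)) (s : ℕ → Finset ι) :
    ∃ θ : WCHT Φ, ∀ n, (s n).sup p ≤ θ.p n := by
  classical
  choose r hr hrx using exists_isHilbertian_sqrt_sum_sq hhilb
  let t (n : ℕ) : Finset ι := (Finset.range (n + 1)).biUnion s
  have hrmono {u v : Finset ι} (huv : u ⊆ v) : r u ≤ r v := fun x => by
    rw [hrx, hrx]
    exact Real.sqrt_le_sqrt (Finset.sum_le_sum_of_subset_of_nonneg huv fun _ _ _ => sq_nonneg _)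
  have hle_r {i : ι} {u : Finset ι} (hi : i ∈ u) : p i ≤ r u := fun x => by
    simpa [hrx, Real.sqrt_sq (apply_nonneg (p i) x)] using
      hrmono (Finset.singleton_subset_iff.2 hi) x
  have hr_le_sum (u : Finset ι) : r u ≤ ∑ i ∈ u, p i := fun x => by
    have hnonneg : 0 ≤ ∑ i ∈ u, p i x := Finset.sum_nonneg fun i _ => apply_nonneg _ x
    rw [hrx, sum_apply, ← Real.sqrt_sq hnonneg]
    exact Real.sqrt_le_sqrt (Finset.sum_sq_le_sq_sum_of_nonneg fun i _ => apply_nonneg _ x)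
  refine ⟨⟨fun n => r (t n), fun n m hnm => hrmono ?_, fun n => hr _,
    fun n => (HasSeparableQuotient.finset_sum fun i _ => hsep i).mono (hr_le_sum _),
    fun n => ?_⟩, fun n => Finset.sup_le fun i hi => hle_r ?_⟩
  · exact Finset.biUnion_subset_biUnion_of_subset_left _ (Finset.range_subset_range.2 (by omega))
  · rw [funext (hrx _)]
    exact (continuous_finsetSum _ fun i _ => (hcont i).pow 2).sqrt
  · exact Finset.mem_biUnion.2 ⟨n, Finset.self_mem_range_succ n, hi⟩

theorem EquicontinuousInProb.exists_finset_sup_lt [TopologicalSpace Φ] {Ω : Type*}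
    [MeasurableSpace Ω] {P : Measure Ω} {X : ℝ → Φ → Ω → ℝ} {s : Set ℝ}
    (hX : EquicontinuousInProb P X s) {ι : Type*} [Nonempty ι] {p : SeminormFamily ℝ Φ ι}
    (hp : WithSeminorms p) {ε : ℝ} (hε : 0 < ε) :
    ∃ (S : Finset ι) (r : ℝ), 0 < r ∧ ∀ t ∈ s, ∀ φ, S.sup p φ < r →
      P {ω | ε ≤ |X t φ ω|} < ENNReal.ofReal ε := by
  obtain ⟨U, hU, hXU⟩ := hX ε hε
  obtain ⟨S, r, hr, hball⟩ := (hp.mem_nhds_iff 0 U).1 hU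
  exact ⟨S, r, hr, fun t ht φ hφ => hXU t ht φ (hball (by rwa [Seminorm.mem_ball_zero]))⟩

theorem exists_wcht_equicontinuous_version_general
    {Φ : Type*} [AddCommGroup Φ] [Module ℝ Φ] [TopologicalSpace Φ]
    {Ω : Type*} [MeasurableSpace Ω] (P : Measure Ω)
    (hΦ : IsNuclearSpace Φ) (T : ℝ)
    (X Xh : ℝ → Φ → Ω → ℝ)
    (hequi : EquicontinuousInProb P X (Set.Icc 0 T))
    (hver : ∀ φ : Φ, ∀ t ∈ Set.Icc (0 : ℝ) T, ∀ᵐ ω ∂P, Xh t φ ω = X t φ ω) :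
    ∃ θ : WCHT Φ, ∀ ε : ℝ, 0 < ε → ∃ (n : ℕ) (δ : ℝ), 0 < δ ∧
      ∀ t ∈ Set.Icc (0 : ℝ) T, ∀ φ : Φ, θ.p n φ < δ →
        P {ω | ε ≤ |Xh t φ ω|} < ENNReal.ofReal ε := by
  obtain ⟨ι, hι, p, hp, hhilb, hnuc⟩ := hΦ
  have hsep (i : ι) : HasSeparableQuotient (p i) :=
    let ⟨j, hij, hHS⟩ := hnuc i
    hHS.hasSeparableQuotient hij (hhilb j)
  choose S r hr hXS using fun k : ℕ =>
    hequi.exists_finset_sup_lt hp (Nat.one_div_pos_of_nat (n := k))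
  obtain ⟨θ, hθ⟩ := exists_wcht_finset_sup_le hhilb hsep hp.continuous_seminorm S
  refine ⟨θ, fun ε hε => ?_⟩
  obtain ⟨k, hk⟩ := exists_nat_one_div_lt hε
  refine ⟨k, r k, hr k, fun t ht φ hφ => ?_⟩
  calc P {ω | ε ≤ |Xh t φ ω|} = P {ω | ε ≤ |X t φ ω|} :=
        measure_congr <| (hver φ t ht).mono fun ω hω => congrArg (fun y => ε ≤ |y|) hω
    _ ≤ P {ω | 1 / ((k : ℝ) + 1) ≤ |X t φ ω|} := measure_mono fun ω hω => hk.le.trans hω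
    _ < ENNReal.ofReal (1 / ((k : ℝ) + 1)) := hXS k t ht φ ((hθ k φ).trans_lt hφ)
    _ ≤ ENNReal.ofReal ε := ENNReal.ofReal_le_ofReal hk.le

/-- Let `Φ` be nuclear, `T > 0`, `X` a cylindrical process on `[0,T]`
whose family `{X_t : t ∈ [0,T]}` is equicontinuous into `L⁰(Ω,F,P)`, and let `X̂(φ)` be a
continuous version of `X(φ)` for each `φ`. Then there exists a weaker countably
Hilbertian topology `θ` on `Φ` such that the family `{X̂_t : t ∈ [0,T]}` is
`θ`-equicontinuous. -/
theorem exists_wcht_equicontinuous_version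
    {Φ : Type*} [AddCommGroup Φ] [Module ℝ Φ] [TopologicalSpace Φ]
    [IsTopologicalAddGroup Φ] [ContinuousSMul ℝ Φ]
    {Ω : Type*} [MeasurableSpace Ω] (P : Measure Ω) [IsProbabilityMeasure P] [P.IsComplete]
    (hΦ : IsNuclearSpace Φ) (T : ℝ) (hT : 0 < T)
    (X Xh : ℝ → Φ → Ω → ℝ)
    (hcyl : IsCylindricalProcess P X (Set.Icc 0 T))
    (hequi : EquicontinuousInProb P X (Set.Icc 0 T))
    (hXhmeas : ∀ t ∈ Set.Icc (0 : ℝ) T, ∀ φ : Φ, Measurable (Xh t φ))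
    (hXhpaths : ∀ φ : Φ, ∀ᵐ ω ∂P, ContinuousOn (fun t => Xh t φ ω) (Set.Icc 0 T))
    (hver : ∀ φ : Φ, ∀ t ∈ Set.Icc (0 : ℝ) T, ∀ᵐ ω ∂P, Xh t φ ω = X t φ ω) :
    ∃ θ : WCHT Φ, ∀ ε : ℝ, 0 < ε → ∃ (n : ℕ) (δ : ℝ), 0 < δ ∧
      ∀ t ∈ Set.Icc (0 : ℝ) T, ∀ φ : Φ, θ.p n φ < δ →
        P {ω | ε ≤ |Xh t φ ω|} < ENNReal.ofReal ε :=
  exists_wcht_equicontinuous_version_general P hΦ T X Xh hequi hver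

end Paper
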